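/- The map S̃ := S ∘ d is a homomorphism for the harmonic product: S̃(u ∗ v) = S̃(u) ∗ S̃(v) for all u, v ∈ H¹. -/

import Mathlib

open scoped BigOperators

/-- `H¹`: the ℚ-vector space with basis the words `z_{k₁}⋯z_{k_r}` in the letters
`z_k` (`k` a positive integer), encoded as finitely supported functions on lists. -/
abbrev H1 : Type := List ℕ+ →₀ ℚ

/-- The basis word `z_{k₁}⋯z_{k_r}` of `H¹` (the empty list is the unit `1`). -/
noncomputable def W (l : List ℕ+) : H1 := Finsupp.single l 1

/-- Left multiplication by the letter `z_k` (linear extension of `w ↦ z_k w`). -/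
noncomputable def consL (k : ℕ+) (h : H1) : H1 := Finsupp.mapDomain (fun w => k :: w) h

/-- Right multiplication by the letter `z_k` (linear extension of `w ↦ w z_k`). -/
noncomputable def mulRk (k : ℕ+) (h : H1) : H1 := Finsupp.mapDomain (fun w => w ++ [k]) h

/-- The harmonic (stuffle) product on words:
`1 ∗ u = u ∗ 1 = u`, `z_k u ∗ z_l v = z_k(u ∗ z_l v) + z_l(z_k u ∗ v) + z_{k+l}(u ∗ v)`. -/
noncomputable def harmW : List ℕ+ → List ℕ+ → H1
  | [], v => W v
  | u, [] => W u
  | k :: u, l :: v =>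
      consL k (harmW u (l :: v)) + consL l (harmW (k :: u) v) + consL (k + l) (harmW u v)
  termination_by u v => u.length + v.length

/-- The harmonic product `∗` on `H¹`, as the ℚ-bilinear extension of `harmW`. -/
noncomputable def harm (g h : H1) : H1 :=
  g.sum fun u c => h.sum fun v d => (c * d) • harmW u v

/-- The product `ш̃` on words in the letters `z_k`:
`1 ш̃ u = u ш̃ 1 = u`, `z_k u ш̃ z_l v = z_k(u ш̃ z_l v) + z_l(z_k u ш̃ v)`. -/
noncomputable def shtW : List ℕ+ → List ℕ+ → H1
  | [], v => W v
  | u, [] => W u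
  | k :: u, l :: v => consL k (shtW u (l :: v)) + consL l (shtW (k :: u) v)
  termination_by u v => u.length + v.length

/-- The shuffle product `ш̃` on `H¹` (on the alphabet `z₁, z₂, …`), bilinear extension. -/
noncomputable def sht (g h : H1) : H1 :=
  g.sum fun u c => h.sum fun v d => (c * d) • shtW u v

/-- Addition of a natural number to a positive natural number. -/
def pplus (k : ℕ+) (e : ℕ) : ℕ+ := ⟨(k : ℕ) + e, by have := k.pos; omega⟩

/-- `σ_m` on words: `σ_m(z_{k₁}⋯z_{k_r}) = Σ_{e₁+⋯+e_r=m} ∏_j C(k_j+e_j-1, e_j) z_{k₁+e₁}⋯z_{k_r+e_r}`,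
which is the word formula for `σ_m(1) = δ_{m,0}`, `σ_m(yw) = y(w ш x^m)`. -/
noncomputable def sigW : ℕ → List ℕ+ → H1
  | m, [] => if m = 0 then W [] else 0
  | m, k :: ks => ∑ e ∈ Finset.range (m + 1),
      ((((k : ℕ) + e - 1).choose e : ℚ)) • consL (pplus k e) (sigW (m - e) ks)
  termination_by m ks => ks.length

/-- `σ_m : H¹ → H¹`, linear extension. -/
noncomputable def sig (m : ℕ) (h : H1) : H1 := h.sum fun ks c => c • sigW m ks

/-- `S` on words: the word formula for `S(1) = 1`, `S(yw) = y S₁(w)` where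
`S₁(x) = x`, `S₁(y) = x + y`; explicitly `S(z_{k₁}⋯z_{k_r})` is the sum over all ways of
replacing separating commas by `+`. -/
noncomputable def StW : List ℕ+ → H1
  | [] => W []
  | [k] => W [k]
  | k :: l :: ks => consL k (StW (l :: ks)) + StW ((k + l) :: ks)
  termination_by ks => ks.length

/-- `S : H¹ → H¹`, linear extension. -/
noncomputable def St (h : H1) : H1 := h.sum fun ks c => c • StW ks

/-- `S̃ = S ∘ d` on words, where `d(x) = x`, `d(y) = -y`, so `d` multiplies a word of
depth `r` by `(-1)^r`. -/
noncomputable def SttW (ks : List ℕ+) : H1 := ((-1 : ℚ)) ^ ks.length • StW ks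

/-- `S̃ = S ∘ d : H¹ → H¹`, linear extension. -/
noncomputable def Stt (h : H1) : H1 := h.sum fun ks c => c • SttW ks

/-- `ψ` on words: `ψ(z_{k₁}⋯z_{k_r}) = Σ_{i=0}^{r-1} z_{k₁}⋯z_{k_i} ∗ S̃(σ₁(z_{k_r}⋯z_{k_{i+1}}))`. -/
noncomputable def psiW (ks : List ℕ+) : H1 :=
  ∑ i ∈ Finset.range ks.length, harm (W (ks.take i)) (Stt (sigW 1 ((ks.drop i).reverse)))

/-- `ψ : yH → H¹`, linear extension. -/
noncomputable def psi (h : H1) : H1 := h.sum fun ks c => c • psiW ks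

/-- `ψ̄` on words: `ψ̄(z_{k₁}⋯z_{k_r}) = Σ_{i=0}^{r-1} (-1)^{r-i} z_{k₁}⋯z_{k_i} ш̃ σ₁(z_{k_r}⋯z_{k_{i+1}})`. -/
noncomputable def psibW (ks : List ℕ+) : H1 :=
  ∑ i ∈ Finset.range ks.length,
    ((-1 : ℚ)) ^ (ks.length - i) • sht (W (ks.take i)) (sigW 1 ((ks.drop i).reverse))

/-- `ψ̄ : yH → H¹`, linear extension. -/
noncomputable def psib (h : H1) : H1 := h.sum fun ks c => c • psibW ks

/-- `ρ` on words:
`ρ(z_{k₁}⋯z_{k_r}) = Σ_{i=1}^{r} (-1)^{r-i} (z_{k₁}⋯z_{k_{i-1}} ш̃ z_{k_r}⋯z_{k_{i+1}}) z_{k_i}`. -/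
noncomputable def rhoW (ks : List ℕ+) : H1 :=
  ∑ i : Fin ks.length, ((-1 : ℚ)) ^ (ks.length - 1 - (i : ℕ)) •
    mulRk (ks.get i) (sht (W (ks.take (i : ℕ))) (W ((ks.drop ((i : ℕ) + 1)).reverse)))

/-- `ρ : yH → yH`, linear extension. -/
noncomputable def rho (h : H1) : H1 := h.sum fun ks c => c • rhoW ks

/-- `yH ⊆ H¹`: the span of the nonempty words `z_{k₁}⋯z_{k_r}` (`r ≥ 1`). -/
noncomputable def yH1 : Submodule ℚ H1 := Submodule.span ℚ {h | ∃ k ks, h = W (k :: ks)}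

/-- `yH ∗ yH`: the ℚ-span of the harmonic products `w₁ ∗ w₂` with `w₁, w₂ ∈ yH`. -/
noncomputable def harmSpan : Submodule ℚ H1 :=
  Submodule.span ℚ {h | ∃ u ∈ yH1, ∃ v ∈ yH1, h = harm u v}

/-- `yH ш̃ yH`: the ℚ-span of the products `w₁ ш̃ w₂` with `w₁, w₂ ∈ yH`. -/
noncomputable def shtSpan : Submodule ℚ H1 :=
  Submodule.span ℚ {h | ∃ u ∈ yH1, ∃ v ∈ yH1, h = sht u v}


/-!
Write `A_k w := z_k w + z_k ⊕ w` (`lconsMerge k`), where `z_k ⊕ z_l w = z_{k+l} w` and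
`z_k ⊕ 1 = 0`. Merging `z_k` into the first letter commutes with `S`, so the recursion
`S(z_k z_l w) = z_k S(z_l w) + S(z_{k+l} w)` becomes `S̃(z_k w) = -A_k S̃(w)`. The operators `A_k`
satisfy the defining recursion of `∗` with the sign of the `z_{k+l}` term reversed:
`A_k g ∗ A_l h = A_k (g ∗ A_l h) + A_l (A_k g ∗ h) - A_{k+l} (g ∗ h)`. The signs coming from `d`
exactly absorb this reversal, so `S̃(u ∗ v) = S̃(u) ∗ S̃(v)` follows for words by induction on
the recursion of `∗`, and in general by bilinearity.
-/

noncomputable def lcons (k : ℕ+) : H1 →ₗ[ℚ] H1 := Finsupp.lmapDomain ℚ ℚ (List.cons k)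

noncomputable def mergeHead (k : ℕ+) : List ℕ+ → H1
  | [] => 0
  | l :: w => W ((k + l) :: w)

noncomputable def lmerge (k : ℕ+) : H1 →ₗ[ℚ] H1 := Finsupp.linearCombination ℚ (mergeHead k)

noncomputable def lconsMerge (k : ℕ+) : H1 →ₗ[ℚ] H1 := lcons k + lmerge k

noncomputable def lStt : H1 →ₗ[ℚ] H1 := Finsupp.linearCombination ℚ SttW

noncomputable def lharm : H1 →ₗ[ℚ] H1 →ₗ[ℚ] H1 :=
  Finsupp.linearCombination ℚ fun u => Finsupp.linearCombination ℚ (harmW u)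

section Words

variable {M : Type*} [AddCommMonoid M] [Module ℚ M]

theorem linearMap_ext_words {φ ψ : H1 →ₗ[ℚ] M} (h : ∀ w, φ (W w) = ψ (W w)) : φ = ψ :=
  Finsupp.lhom_ext' fun w => LinearMap.ext_ring (h w)

theorem bilinearMap_ext_words {φ ψ : H1 →ₗ[ℚ] H1 →ₗ[ℚ] M}
    (h : ∀ u v, φ (W u) (W v) = ψ (W u) (W v)) : φ = ψ :=
  linearMap_ext_words fun u => linearMap_ext_words (h u)

theorem linearCombination_W (f : List ℕ+ → M) (w : List ℕ+) :
    Finsupp.linearCombination ℚ f (W w) = f w := by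
  rw [W, Finsupp.linearCombination_single, one_smul]

end Words

theorem lcons_W (k : ℕ+) (w : List ℕ+) : lcons k (W w) = W (k :: w) :=
  Finsupp.mapDomain_single

theorem lmerge_W_nil (k : ℕ+) : lmerge k (W []) = 0 := linearCombination_W _ _

theorem lmerge_W_cons (k l : ℕ+) (w : List ℕ+) : lmerge k (W (l :: w)) = W ((k + l) :: w) :=
  linearCombination_W _ _

theorem lmerge_lcons (k l : ℕ+) (h : H1) : lmerge k (lcons l h) = lcons (k + l) h := by
  show (lmerge k ∘ₗ lcons l) h = _
  congr 1
  exact linearMap_ext_words fun w => by simp [lcons_W, lmerge_W_cons]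

theorem lconsMerge_apply (k : ℕ+) (h : H1) : lconsMerge k h = lcons k h + lmerge k h := rfl

theorem StW_cons_cons (k l : ℕ+) (ks : List ℕ+) :
    StW (k :: l :: ks) = lcons k (StW (l :: ks)) + StW ((k + l) :: ks) := by
  rw [StW]; rfl

theorem lmerge_StW (k l : ℕ+) (ks : List ℕ+) :
    lmerge k (StW (l :: ks)) = StW ((k + l) :: ks) := by
  induction ks generalizing l with
  | nil => rw [StW, StW, lmerge_W_cons]
  | cons m ks ih => rw [StW_cons_cons, StW_cons_cons, map_add, lmerge_lcons, ih, add_assoc]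

theorem SttW_nil : SttW [] = W [] := by rw [SttW, StW, List.length_nil, pow_zero, one_smul]

theorem SttW_cons (k : ℕ+) (ks : List ℕ+) : SttW (k :: ks) = -lconsMerge k (SttW ks) := by
  cases ks with
  | nil => simp [SttW, StW, lconsMerge, lcons_W, lmerge_W_nil]
  | cons l ks =>
    simp only [SttW, List.length_cons, map_smul, lconsMerge_apply, lmerge_StW]
    rw [StW_cons_cons, pow_succ]
    module

theorem lStt_W (w : List ℕ+) : lStt (W w) = SttW w := linearCombination_W _ _

theorem lStt_lcons (k : ℕ+) (h : H1) : lStt (lcons k h) = -lconsMerge k (lStt h) := by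
  show (lStt ∘ₗ lcons k) h = (-(lconsMerge k ∘ₗ lStt)) h
  congr 1
  exact linearMap_ext_words fun w => by simp [lcons_W, lStt_W, SttW_cons]

theorem harmW_nil_left (v : List ℕ+) : harmW [] v = W v := by rw [harmW]

theorem harmW_nil_right (u : List ℕ+) : harmW u [] = W u := by
  cases u <;> rw [harmW]
  exact List.cons_ne_nil _ _

theorem harmW_cons_cons (k l : ℕ+) (u v : List ℕ+) :
    harmW (k :: u) (l :: v) =
      lcons k (harmW u (l :: v)) + lcons l (harmW (k :: u) v) + lcons (k + l) (harmW u v) := by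
  rw [harmW]; rfl

theorem lharm_W_W (u v : List ℕ+) : lharm (W u) (W v) = harmW u v := by
  rw [lharm, linearCombination_W, linearCombination_W]

theorem harm_eq_lharm (g h : H1) : harm g h = lharm g h := by
  simp [harm, lharm, Finsupp.linearCombination_apply, Finsupp.sum, Finset.smul_sum, mul_smul]

theorem lharm_W_nil_left (h : H1) : lharm (W []) h = h := by
  refine LinearMap.congr_fun (linearMap_ext_words (ψ := LinearMap.id) fun v => ?_) h
  rw [lharm_W_W, harmW_nil_left, LinearMap.id_apply]

theorem lharm_W_nil_right (g : H1) : lharm g (W []) = g := by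
  refine LinearMap.congr_fun
    (linearMap_ext_words (φ := lharm.flip (W [])) (ψ := LinearMap.id) fun u => ?_) g
  rw [LinearMap.flip_apply, lharm_W_W, harmW_nil_right, LinearMap.id_apply]

theorem lharm_lconsMerge_W_lconsMerge_W (k l : ℕ+) (u v : List ℕ+) :
    lharm (lconsMerge k (W u)) (lconsMerge l (W v)) =
      lconsMerge k (lharm (W u) (lconsMerge l (W v)))
        + lconsMerge l (lharm (lconsMerge k (W u)) (W v))
        - lconsMerge (k + l) (lharm (W u) (W v)) := by
  cases u <;> cases v <;>
  · simp only [lconsMerge_apply, lcons_W, lmerge_W_nil, lmerge_W_cons, add_zero, map_add,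
      LinearMap.add_apply, lharm_W_W, harmW_cons_cons, harmW_nil_left, harmW_nil_right,
      lmerge_lcons, add_comm (G := ℕ+), add_assoc (G := ℕ+), add_left_comm (G := ℕ+)]
    abel

theorem lharm_lconsMerge_lconsMerge (k l : ℕ+) (g h : H1) :
    lharm (lconsMerge k g) (lconsMerge l h) =
      lconsMerge k (lharm g (lconsMerge l h)) + lconsMerge l (lharm (lconsMerge k g) h)
        - lconsMerge (k + l) (lharm g h) := by
  have onWords := bilinearMap_ext_words
    (φ := lharm.compl₁₂ (lconsMerge k) (lconsMerge l))
    (ψ := (lharm.compl₂ (lconsMerge l)).compr₂ (lconsMerge k)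
      + (lharm ∘ₗ lconsMerge k).compr₂ (lconsMerge l) - lharm.compr₂ (lconsMerge (k + l)))
    fun u v => by simpa using lharm_lconsMerge_W_lconsMerge_W k l u v
  simpa using LinearMap.congr_fun₂ onWords g h

theorem lStt_harmW (u v : List ℕ+) : lStt (harmW u v) = lharm (SttW u) (SttW v) := by
  induction u, v using harmW.induct with
  | case1 v => rw [harmW_nil_left, lStt_W, SttW_nil, lharm_W_nil_left]
  | case2 u _ => rw [harmW_nil_right, lStt_W, SttW_nil, lharm_W_nil_right]
  | case3 k u l v ih₁ ih₂ ih₃ =>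
    rw [harmW_cons_cons, map_add, map_add, lStt_lcons, lStt_lcons, lStt_lcons, ih₁, ih₂, ih₃,
      SttW_cons, SttW_cons]
    simp only [map_neg, LinearMap.neg_apply, neg_neg, lharm_lconsMerge_lconsMerge]
    abel

/-- `S̃ = S ∘ d` is a homomorphism for the harmonic product:
`S̃(u ∗ v) = S̃(u) ∗ S̃(v)` for all `u, v ∈ H¹`. -/
theorem Stt_harm_hom (u v : H1) : Stt (harm u v) = harm (Stt u) (Stt v) := by
  have hom : lharm.compr₂ lStt = lharm.compl₁₂ lStt lStt :=
    bilinearMap_ext_words fun u v => by simpa [lharm_W_W, lStt_W] using lStt_harmW u v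
  rw [harm_eq_lharm, harm_eq_lharm]
  exact LinearMap.congr_fun₂ hom u v
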